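/- Fix λ ∈ ℝ. Define, for f ∈ C_c^∞(ℝⁿ), H₀f(x) := (1/2)Δf(x) − (1/2)⟨∇V(x), ∇f(x)⟩ and H₁f(x) := (1+2λ)⟨b(x), ∇f(x)⟩ + U_λ(x)·f(x), where U_λ(x) := 2λ(1+λ)|b(x)|² + λ·(∇·b)(x). Then H₁ is H₀-bounded with relative bound 0 in L²(ℝⁿ, e^{−V(x)}dx): for every γ > 0 there exists a constant C_γ > 0 such that for every f ∈ C_c^∞(ℝⁿ), ‖H₁f‖ ≤ γ·‖H₀f‖ + C_γ·‖f‖, where ‖g‖² := ∫_{ℝⁿ} |g(x)|²·e^{−V(x)} dx. -/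

import Mathlib

open MeasureTheory Filter Real Set
open scoped InnerProductSpace

noncomputable section

/-- Euclidean space ℝⁿ. -/
abbrev Euc (n : ℕ) := EuclideanSpace ℝ (Fin n)

/-- `InHT n T x φ φ'` : `φ : [0,T] → ℝⁿ` is an absolutely continuous path starting at `x`,
with (a.e.) derivative `φ'` which is square integrable on `[0,T]`. -/
def InHT (n : ℕ) (T : ℝ) (x : Euc n) (φ φ' : ℝ → Euc n) : Prop :=
  φ 0 = x ∧
  IntervalIntegrable φ' volume 0 T ∧
  IntervalIntegrable (fun t => ‖φ' t‖ ^ 2) volume 0 T ∧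
  ∀ t ∈ Set.Icc (0 : ℝ) T, φ t = x + ∫ s in (0 : ℝ)..t, φ' s

/-- Freidlin–Wentzell action functional `I^x_T`. -/
def FW (n : ℕ) (c : Euc n → Euc n) (T : ℝ) (φ φ' : ℝ → Euc n) : ℝ :=
  (1 / 2) * ∫ t in (0 : ℝ)..T, ‖φ' t - c (φ t)‖ ^ 2

/-- Power dissipated by the vector field `b` along the path, `L_T`. -/
def Diss (n : ℕ) (b : Euc n → Euc n) (T : ℝ) (φ φ' : ℝ → Euc n) : ℝ :=
  (2 / T) * ∫ t in (0 : ℝ)..T, ⟪b (φ t), φ' t⟫_ℝ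

/-- `S^{xy}_T(q)`, infimum of the action over paths from `x` to `y` dissipating power `q`. -/
def Sxy (n : ℕ) (b c : Euc n → Euc n) (T : ℝ) (x y : Euc n) (q : ℝ) : ℝ :=
  sInf { r : ℝ | ∃ φ φ' : ℝ → Euc n,
    InHT n T x φ φ' ∧ φ T = y ∧ Diss n b T φ φ' = q ∧ FW n c T φ φ' = r }

/-- `S^{x}_T(q)`, infimum of the action over paths from `x` with free endpoint. -/
def Sx (n : ℕ) (b c : Euc n → Euc n) (T : ℝ) (x : Euc n) (q : ℝ) : ℝ :=
  sInf { r : ℝ | ∃ φ φ' : ℝ → Euc n,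
    InHT n T x φ φ' ∧ Diss n b T φ φ' = q ∧ FW n c T φ φ' = r }

/-- `s^x(q) = inf_{T>0} S^{xx}_T(q)/T`. -/
def sfun (n : ℕ) (b c : Euc n → Euc n) (x : Euc n) (q : ℝ) : ℝ :=
  sInf { r : ℝ | ∃ T : ℝ, 0 < T ∧ r = Sxy n b c T x x q / T }

/-- Assumption (A). -/
def AssumptionA (n : ℕ) (V : Euc n → ℝ) : Prop :=
  ContDiff ℝ 2 V ∧
  Tendsto (fun x : Euc n => ⟪gradient V x, x⟫_ℝ / ‖x‖) (cocompact (Euc n)) atTop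

/-- Assumption (B): `b` is `C¹`, bounded with bounded derivative and not conservative. -/
def AssumptionB (n : ℕ) (b : Euc n → Euc n) : Prop :=
  ContDiff ℝ 1 b ∧
  (∃ M : ℝ, ∀ x, ‖b x‖ ≤ M) ∧
  (∃ M : ℝ, ∀ x, ‖fderiv ℝ b x‖ ≤ M) ∧
  ¬ ∃ F : Euc n → ℝ, Differentiable ℝ F ∧ ∀ x, gradient F x = b x

/-- The divergence `∇·b` of a vector field on `ℝⁿ`. -/
def divg (n : ℕ) (b : Euc n → Euc n) (x : Euc n) : ℝ :=
  ∑ i : Fin n, ⟪fderiv ℝ b x (EuclideanSpace.single i 1), EuclideanSpace.single i 1⟫_ℝ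

/-- The operator `H₀ f = (1/2)Δf - (1/2)⟨∇V, ∇f⟩`, with the Laplacian written as the sum of
second partial derivatives in the coordinate directions. -/
def H0op (n : ℕ) (V : Euc n → ℝ) (f : Euc n → ℝ) (x : Euc n) : ℝ :=
  (1/2) * (∑ i : Fin n,
      fderiv ℝ (fun y => fderiv ℝ f y (EuclideanSpace.single i 1)) x (EuclideanSpace.single i 1))
    - (1/2) * ⟪gradient V x, gradient f x⟫_ℝ

/-- The operator `H₁ f = (1+2λ)⟨b, ∇f⟩ + U_λ·f`, where
`U_λ(x) = 2λ(1+λ)|b(x)|² + λ·(∇·b)(x)`. -/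
def H1op (n : ℕ) (b : Euc n → Euc n) (lam : ℝ) (f : Euc n → ℝ) (x : Euc n) : ℝ :=
  (1 + 2 * lam) * ⟪b x, gradient f x⟫_ℝ
    + (2 * lam * (1 + lam) * ‖b x‖ ^ 2 + lam * divg n b x) * f x

/-- The `L²(ℝⁿ, e^{-V}dx)` norm. -/
def wNorm (n : ℕ) (V : Euc n → ℝ) (g : Euc n → ℝ) : ℝ :=
  Real.sqrt (∫ x : Euc n, (g x) ^ 2 * Real.exp (-V x))

/-! ### Basic gradient facts -/

lemma grad_inner {n : ℕ} (g : Euc n → ℝ) (x v : Euc n) :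
    ⟪gradient g x, v⟫_ℝ = fderiv ℝ g x v := by
  simp [gradient, InnerProductSpace.toDual_symm_apply]

lemma grad_apply {n : ℕ} (g : Euc n → ℝ) (x : Euc n) (i : Fin n) :
    gradient g x i = fderiv ℝ g x (EuclideanSpace.single i 1) := by
  rw [← grad_inner, EuclideanSpace.inner_single_right]
  simp

lemma grad_eq_zero {n : ℕ} {g : Euc n → ℝ} {x : Euc n} (h : fderiv ℝ g x = 0) :
    gradient g x = 0 := by
  simp [gradient, h]

lemma grad_continuous {n : ℕ} {g : Euc n → ℝ} (h : Continuous (fderiv ℝ g)) :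
    Continuous (gradient g) := by
  have : Continuous fun x => (InnerProductSpace.toDual ℝ (Euc n)).symm (fderiv ℝ g x) :=
    (InnerProductSpace.toDual ℝ (Euc n)).symm.continuous.comp h
  exact this

lemma inner_sum_eq {n : ℕ} (u v : Euc n) :
    ⟪u, v⟫_ℝ = ∑ i, ⟪u, EuclideanSpace.single i (1:ℝ)⟫_ℝ * ⟪v, EuclideanSpace.single i (1:ℝ)⟫_ℝ := by
  simp only [EuclideanSpace.inner_single_right, RCLike.star_def, starRingEnd_apply, star_trivial,
    one_mul]
  simp [PiLp.inner_apply, RCLike.inner_apply]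
  exact Finset.sum_congr rfl fun i _ => mul_comm _ _

/-! ### Divergence theorem -/

lemma div_int_zero {m : ℕ} (w : Fin (m+1) → (Fin (m+1) → ℝ) → ℝ)
    (hw : ∀ i, ContDiff ℝ 1 (w i)) (hs : ∀ i, HasCompactSupport (w i)) :
    ∫ x : Fin (m+1) → ℝ, ∑ i, fderiv ℝ (w i) x (Pi.single i 1) = 0 := by
  obtain ⟨R, hR0, hRsub⟩ : ∃ R : ℝ, 0 < R ∧
      (⋃ i, tsupport (w i)) ⊆ Metric.ball (0 : Fin (m+1) → ℝ) R :=
    (isCompact_iUnion fun i => (hs i)).isBounded.subset_ball_lt 0 0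
  have hnot : ∀ (x : Fin (m+1) → ℝ), R ≤ ‖x‖ → ∀ i, w i x = 0 := by
    intro x hx i
    apply image_eq_zero_of_notMem_tsupport
    intro hmem
    have := hRsub (Set.mem_iUnion.2 ⟨i, hmem⟩)
    rw [Metric.mem_ball, dist_zero_right] at this
    linarith
  set a : Fin (m+1) → ℝ := fun _ => -R with ha
  set b : Fin (m+1) → ℝ := fun _ => R with hb
  have hle : a ≤ b := fun i => by simp only [a, b]; linarith
  have hFc : ∀ i, Continuous fun x => fderiv ℝ (w i) x (Pi.single i 1) :=
    fun i => ((hw i).continuous_fderiv one_ne_zero).clm_apply continuous_const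
  have hFcont : Continuous fun x : Fin (m+1) → ℝ => ∑ i, fderiv ℝ (w i) x (Pi.single i 1) :=
    continuous_finset_sum _ fun i _ => hFc i
  have hFsupp : ∀ (x : Fin (m+1) → ℝ), R ≤ ‖x‖ →
      (∑ i, fderiv ℝ (w i) x (Pi.single i 1)) = 0 := by
    intro x hx
    refine Finset.sum_eq_zero fun i _ => ?_
    have : fderiv ℝ (w i) x = 0 := by
      have hx' : x ∉ tsupport (w i) := by
        intro hmem
        have := hRsub (Set.mem_iUnion.2 ⟨i, hmem⟩)
        rw [Metric.mem_ball, dist_zero_right] at this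
        linarith
      by_contra h
      exact hx' (support_fderiv_subset ℝ (Function.mem_support.2 h))
    simp [this]
  have hFhcs : HasCompactSupport fun x : Fin (m+1) → ℝ =>
      ∑ i, fderiv ℝ (w i) x (Pi.single i 1) := by
    apply HasCompactSupport.intro (isCompact_closedBall (0 : Fin (m+1) → ℝ) R)
    intro x hx
    rw [Metric.mem_closedBall, dist_zero_right, not_le] at hx
    exact hFsupp x hx.le
  have hInt : Integrable fun x : Fin (m+1) → ℝ =>
      ∑ i, fderiv ℝ (w i) x (Pi.single i 1) := hFcont.integrable_of_hasCompactSupport hFhcs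
  have key := MeasureTheory.integral_divergence_of_hasFDerivAt_off_countable' a b hle
      w (fun i x => fderiv ℝ (w i) x) ∅ Set.countable_empty
      (fun i => ((hw i).continuous).continuousOn)
      (fun x _ i => ((hw i).differentiable one_ne_zero x).hasFDerivAt)
      hInt.integrableOn
  have hIcc : ∫ x in Icc a b, ∑ i, fderiv ℝ (w i) x (Pi.single i 1)
      = ∫ x : Fin (m+1) → ℝ, ∑ i, fderiv ℝ (w i) x (Pi.single i 1) := by
    apply setIntegral_eq_integral_of_forall_compl_eq_zero
    intro x hx
    apply hFsupp
    simp only [Set.mem_Icc, a, b, not_and_or, Pi.le_def, not_forall, not_le] at hx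
    have : ∃ i, R < |x i| := by
      rcases hx with ⟨i, hi⟩ | ⟨i, hi⟩
      · exact ⟨i, by rw [lt_abs]; right; linarith⟩
      · exact ⟨i, lt_of_lt_of_le hi (le_abs_self _)⟩
    obtain ⟨i, hi⟩ := this
    have h2 := norm_le_pi_norm x i
    rw [Real.norm_eq_abs] at h2
    linarith
  rw [hIcc] at key
  rw [key]
  apply Finset.sum_eq_zero
  intro i _
  have h1 : ∀ (y : Fin m → ℝ), w i (i.insertNth (b i) y) = 0 := by
    intro y
    apply hnot
    · have h2 := norm_le_pi_norm (i.insertNth (b i) y : Fin (m+1) → ℝ) i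
      rw [Real.norm_eq_abs, Fin.insertNth_apply_same] at h2
      simp only [b] at h2
      rw [abs_of_pos hR0] at h2
      exact h2
  have h2 : ∀ (y : Fin m → ℝ), w i (i.insertNth (a i) y) = 0 := by
    intro y
    apply hnot
    · have h2 := norm_le_pi_norm (i.insertNth (a i) y : Fin (m+1) → ℝ) i
      rw [Real.norm_eq_abs, Fin.insertNth_apply_same] at h2
      simp only [a] at h2
      rw [abs_neg, abs_of_pos hR0] at h2
      exact h2
  simp [h1, h2]

lemma euc_div_int_zero {n : ℕ} (w : Fin n → Euc n → ℝ)
    (hw : ∀ i, ContDiff ℝ 1 (w i)) (hs : ∀ i, HasCompactSupport (w i)) :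
    ∫ x : Euc n, ∑ i, fderiv ℝ (w i) x (EuclideanSpace.single i 1) = 0 := by
  cases n with
  | zero => simp
  | succ m =>
    have hmp := (EuclideanSpace.volume_preserving_symm_measurableEquiv_toLp (Fin (m+1))).symm
    set L : (Fin (m+1) → ℝ) ≃L[ℝ] Euc (m+1) :=
      (EuclideanSpace.equiv (Fin (m+1)) ℝ).symm with hL
    have hco : (MeasurableEquiv.toLp 2 (Fin (m+1) → ℝ)) = (L : (Fin (m+1) → ℝ) → Euc (m+1)) := rfl
    have hmeas : ∫ x : Euc (m+1), ∑ i, fderiv ℝ (w i) x (EuclideanSpace.single i 1)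
        = ∫ y : Fin (m+1) → ℝ, ∑ i, fderiv ℝ (w i) (L y) (EuclideanSpace.single i 1) := by
      rw [← hmp.integral_comp (MeasurableEquiv.toLp 2 (Fin (m+1) → ℝ)).measurableEmbedding]
      rfl
    rw [hmeas]
    have hder : ∀ i (y : Fin (m+1) → ℝ),
        fderiv ℝ (w i ∘ L) y (Pi.single i 1) = fderiv ℝ (w i) (L y) (EuclideanSpace.single i 1) := by
      intro i y
      rw [fderiv_comp y ((hw i).differentiable one_ne_zero (L y)) (L.differentiableAt)]
      simp only [ContinuousLinearMap.coe_comp', Function.comp_apply, L.fderiv]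
      congr 1
    have := div_int_zero (fun i => w i ∘ L)
      (fun i => (hw i).comp L.contDiff)
      (fun i => (hs i).comp_homeomorph L.toHomeomorph)
    rw [← this]
    congr 1
    ext y
    exact Finset.sum_congr rfl fun i _ => (hder i y).symm

/-! ### Support and integrability helpers -/

lemma integrable_of_supp {n : ℕ} {f g : Euc n → ℝ} (hg : Continuous g)
    (hf : HasCompactSupport f) (h : ∀ x, x ∉ tsupport f → g x = 0) :
    Integrable g := by
  apply hg.integrable_of_hasCompactSupport
  exact HasCompactSupport.intro hf h

lemma fderiv2_zero {n : ℕ} {f : Euc n → ℝ} {x : Euc n} (hx : x ∉ tsupport f) (v : Euc n) :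
    fderiv ℝ (fun y => fderiv ℝ f y v) x = 0 := by
  by_contra h
  have h1 : x ∈ tsupport (fun y => fderiv ℝ f y v) :=
    support_fderiv_subset ℝ (Function.mem_support.2 h)
  have h2 : tsupport (fun y => fderiv ℝ f y v) ⊆ tsupport f := by
    apply closure_minimal _ (isClosed_tsupport f)
    intro y hy
    rw [Function.mem_support] at hy
    by_contra hy2
    have : fderiv ℝ f y = 0 := by
      by_contra h3
      exact hy2 (support_fderiv_subset ℝ (Function.mem_support.2 h3))
    simp [this] at hy
  exact hx (h2 h1)

lemma fderiv_zero_of_nmem {n : ℕ} {f : Euc n → ℝ} {x : Euc n} (hx : x ∉ tsupport f) :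
    fderiv ℝ f x = 0 := by
  by_contra h
  exact hx (support_fderiv_subset ℝ (Function.mem_support.2 h))

/-- Continuity of second directional derivative for a smooth function. -/
lemma cont_fderiv2 {n : ℕ} {f : Euc n → ℝ} (hf : ContDiff ℝ (⊤ : ℕ∞) f) (v : Euc n) :
    Continuous fun x => fderiv ℝ (fun y => fderiv ℝ f y v) x v := by
  have h1 : ContDiff ℝ (⊤ : ℕ∞) fun y => fderiv ℝ f y v :=
    (hf.fderiv_right (m := (⊤ : ℕ∞)) (by simp)).clm_apply contDiff_const
  exact ((h1.fderiv_right (m := (⊤ : ℕ∞)) (by simp)).clm_apply contDiff_const).continuous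

lemma H0_continuous {n : ℕ} {V f : Euc n → ℝ} (hV : ContDiff ℝ 2 V) (hf : ContDiff ℝ (⊤ : ℕ∞) f) :
    Continuous (H0op n V f) := by
  unfold H0op
  apply Continuous.sub
  · exact continuous_const.mul (continuous_finset_sum _ fun i _ => cont_fderiv2 hf _)
  · apply continuous_const.mul
    apply Continuous.inner
    · exact grad_continuous (hV.continuous_fderiv (by norm_num))
    · exact grad_continuous ((hf.fderiv_right (m := (⊤ : ℕ∞)) (by simp)).continuous)

lemma H0_zero {n : ℕ} {V f : Euc n → ℝ} {x : Euc n} (hx : x ∉ tsupport f) :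
    H0op n V f x = 0 := by
  unfold H0op
  have h1 : gradient f x = 0 := grad_eq_zero (fderiv_zero_of_nmem hx)
  have h2 : ∀ i : Fin n,
      fderiv ℝ (fun y => fderiv ℝ f y (EuclideanSpace.single i 1)) x (EuclideanSpace.single i 1)
        = 0 := fun i => by rw [fderiv2_zero hx]; rfl
  simp [h1, h2]

lemma H1_continuous {n : ℕ} {b : Euc n → Euc n} {f : Euc n → ℝ} (hb : ContDiff ℝ 1 b)
    (hf : ContDiff ℝ (⊤ : ℕ∞) f) (lam : ℝ) : Continuous (H1op n b lam f) := by
  unfold H1op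
  have hgf : Continuous (gradient f) := grad_continuous ((hf.fderiv_right (m := (⊤ : ℕ∞)) (by simp)).continuous)
  have hdb : Continuous (fderiv ℝ b) := hb.continuous_fderiv one_ne_zero
  apply Continuous.add
  · exact continuous_const.mul (hb.continuous.inner hgf)
  · apply Continuous.mul _ hf.continuous
    apply Continuous.add
    · exact continuous_const.mul ((hb.continuous.norm).pow 2)
    · apply continuous_const.mul
      apply continuous_finset_sum _ fun i _ => ?_
      exact ((hdb.clm_apply continuous_const).inner continuous_const)

lemma H1_zero {n : ℕ} {b : Euc n → Euc n} {f : Euc n → ℝ} {lam : ℝ} {x : Euc n}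
    (hx : x ∉ tsupport f) : H1op n b lam f x = 0 := by
  unfold H1op
  have h1 : gradient f x = 0 := grad_eq_zero (fderiv_zero_of_nmem hx)
  have h2 : f x = 0 := image_eq_zero_of_notMem_tsupport hx
  simp [h1, h2]

/-! ### Integration by parts -/

lemma ibp {n : ℕ} {V f : Euc n → ℝ} (hV : ContDiff ℝ 2 V) (hf : ContDiff ℝ (⊤ : ℕ∞) f)
    (hsf : HasCompactSupport f) :
    ∫ x : Euc n, ‖gradient f x‖ ^ 2 * Real.exp (-V x)
      = -2 * ∫ x : Euc n, f x * H0op n V f x * Real.exp (-V x) := by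
  classical
  set e : Fin n → Euc n := fun i => EuclideanSpace.single i (1:ℝ) with he
  set w : Fin n → Euc n → ℝ :=
    fun i x => (f x * Real.exp (-V x)) * fderiv ℝ f x (e i) with hw
  -- regularity of w
  have hVc : ContDiff ℝ 1 fun x => Real.exp (-V x) :=
    (Real.contDiff_exp.of_le le_top).comp (hV.neg.of_le one_le_two)
  have hgi : ∀ i, ContDiff ℝ 1 fun y => fderiv ℝ f y (e i) := fun i =>
    ((hf.fderiv_right (m := (⊤ : ℕ∞)) (by simp)).clm_apply contDiff_const).of_le (by simp)
  have hwreg : ∀ i, ContDiff ℝ 1 (w i) := fun i =>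
    ((hf.of_le (by simp)).mul hVc).mul (hgi i)
  have hwsupp : ∀ i, HasCompactSupport (w i) := by
    intro i
    apply HasCompactSupport.intro hsf
    intro x hx
    simp [hw, image_eq_zero_of_notMem_tsupport hx]
  have hdiv := euc_div_int_zero w hwreg hwsupp
  -- pointwise computation of the divergence
  have hpt : ∀ x : Euc n, ∑ i, fderiv ℝ (w i) x (e i)
      = ‖gradient f x‖ ^ 2 * Real.exp (-V x) + 2 * (f x * H0op n V f x * Real.exp (-V x)) := by
    intro x
    set df := fderiv ℝ f x with hdf
    set dV := fderiv ℝ V x with hdV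
    have hfd : HasFDerivAt f df x := (hf.differentiable (by simp) x).hasFDerivAt
    have hVd : HasFDerivAt V dV x := (hV.differentiable two_ne_zero x).hasFDerivAt
    have hexp : HasFDerivAt (fun y => Real.exp (-V y)) (Real.exp (-V x) • -dV) x := by
      have h1 : HasFDerivAt (fun y => -V y) (-dV) x := hVd.neg
      exact (Real.hasDerivAt_exp (-V x)).comp_hasFDerivAt x h1
    have hu : HasFDerivAt (fun y => f y * Real.exp (-V y))
        (f x • (Real.exp (-V x) • -dV) + Real.exp (-V x) • df) x := hfd.mul hexp
    have hgd : ∀ i, HasFDerivAt (fun y => fderiv ℝ f y (e i))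
        (fderiv ℝ (fun y => fderiv ℝ f y (e i)) x) x :=
      fun i => (((hgi i).differentiable one_ne_zero) x).hasFDerivAt
    have hwd : ∀ i, fderiv ℝ (w i) x =
        (f x * Real.exp (-V x)) • fderiv ℝ (fun y => fderiv ℝ f y (e i)) x
          + (fderiv ℝ f x (e i)) • (f x • (Real.exp (-V x) • -dV) + Real.exp (-V x) • df) := by
      intro i
      exact (hu.mul (hgd i)).fderiv
    have hterm : ∀ i, fderiv ℝ (w i) x (e i)
        = (f x * Real.exp (-V x)) * fderiv ℝ (fun y => fderiv ℝ f y (e i)) x (e i)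
          + Real.exp (-V x) * (df (e i) * df (e i))
          - (f x * Real.exp (-V x)) * (dV (e i) * df (e i)) := by
      intro i
      rw [hwd i]
      simp only [ContinuousLinearMap.add_apply, ContinuousLinearMap.coe_smul',
        Pi.smul_apply, ContinuousLinearMap.neg_apply, smul_eq_mul]
      ring
    rw [Finset.sum_congr rfl fun i _ => hterm i]
    rw [Finset.sum_sub_distrib, Finset.sum_add_distrib, ← Finset.mul_sum, ← Finset.mul_sum,
      ← Finset.mul_sum]
    have S1 : ∑ i, df (e i) * df (e i) = ‖gradient f x‖ ^ 2 := by
      rw [← real_inner_self_eq_norm_sq, inner_sum_eq]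
      exact Finset.sum_congr rfl fun i _ => by simp [grad_apply, he, hdf]
    have S2 : ∑ i, dV (e i) * df (e i) = ⟪gradient V x, gradient f x⟫_ℝ := by
      rw [inner_sum_eq]
      exact Finset.sum_congr rfl fun i _ => by simp [grad_apply, he, hdf, hdV]
    rw [S1, S2]
    unfold H0op
    ring
  have hdiv' : ∫ x : Euc n,
      (‖gradient f x‖ ^ 2 * Real.exp (-V x) + 2 * (f x * H0op n V f x * Real.exp (-V x))) = 0 := by
    rw [← hdiv]
    exact integral_congr_ae (Filter.Eventually.of_forall fun x => (hpt x).symm)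
  have hVcont : Continuous V := hV.continuous
  have hint1 : Integrable fun x : Euc n => ‖gradient f x‖ ^ 2 * Real.exp (-V x) := by
    apply integrable_of_supp _ hsf
    · intro x hx
      simp [grad_eq_zero (fderiv_zero_of_nmem hx)]
    · exact (((grad_continuous ((hf.fderiv_right (m := (⊤ : ℕ∞)) (by simp)).continuous)).norm.pow 2).mul
        (hVcont.neg.rexp))
  have hint2 : Integrable fun x : Euc n => f x * H0op n V f x * Real.exp (-V x) := by
    apply integrable_of_supp _ hsf
    · intro x hx
      simp [image_eq_zero_of_notMem_tsupport hx]
    · exact ((hf.continuous.mul (H0_continuous hV hf)).mul (hVcont.neg.rexp))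
  rw [integral_add hint1 (hint2.const_mul 2), integral_const_mul] at hdiv'
  linarith

/-! ### Weighted L² machinery -/

lemma wNorm_nonneg (n : ℕ) (V g : Euc n → ℝ) : 0 ≤ wNorm n V g := Real.sqrt_nonneg _

lemma wInt_nonneg (n : ℕ) (V g : Euc n → ℝ) : 0 ≤ ∫ x : Euc n, (g x)^2 * Real.exp (-V x) :=
  integral_nonneg fun x => by positivity

lemma wNorm_sq (n : ℕ) (V g : Euc n → ℝ) :
    wNorm n V g ^ 2 = ∫ x : Euc n, (g x)^2 * Real.exp (-V x) :=
  Real.sq_sqrt (wInt_nonneg n V g)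

lemma wNorm_abs (n : ℕ) (V g : Euc n → ℝ) : wNorm n V (fun x => |g x|) = wNorm n V g := by
  simp [wNorm, sq_abs]

/-- Cauchy–Schwarz in the weighted `L²` space. -/
lemma wCS {n : ℕ} {V u v : Euc n → ℝ} (hVc : Continuous V) (hu : Continuous u)
    (hv : Continuous v) (hsu : HasCompactSupport u) (hsv : HasCompactSupport v) :
    ∫ x : Euc n, u x * v x * Real.exp (-V x) ≤ wNorm n V u * wNorm n V v := by
  set U : Euc n → ℝ := fun x => |u x| * Real.exp (-(V x)/2) with hU
  set W : Euc n → ℝ := fun x => |v x| * Real.exp (-(V x)/2) with hW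
  have hUc : Continuous U := hu.abs.mul ((hVc.neg.div_const 2).rexp)
  have hWc : Continuous W := hv.abs.mul ((hVc.neg.div_const 2).rexp)
  have hUs : HasCompactSupport U := by
    apply HasCompactSupport.intro hsu
    intro x hx
    simp [hU, image_eq_zero_of_notMem_tsupport hx]
  have hWs : HasCompactSupport W := by
    apply HasCompactSupport.intro hsv
    intro x hx
    simp [hW, image_eq_zero_of_notMem_tsupport hx]
  have hexp : ∀ x : Euc n, Real.exp (-(V x)/2) * Real.exp (-(V x)/2) = Real.exp (-V x) := by
    intro x
    rw [← Real.exp_add]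
    ring_nf
  have step1 : ∫ x : Euc n, u x * v x * Real.exp (-V x) ≤ ∫ x : Euc n, U x * W x := by
    apply integral_mono
    · apply ((hu.mul hv).mul (hVc.neg.rexp)).integrable_of_hasCompactSupport
      apply HasCompactSupport.intro hsu
      intro x hx
      simp [image_eq_zero_of_notMem_tsupport hx]
    · apply (hUc.mul hWc).integrable_of_hasCompactSupport
      apply HasCompactSupport.intro hsu
      intro x hx
      simp [hU, image_eq_zero_of_notMem_tsupport hx]
    · intro x
      dsimp only [hU, hW]
      have h1 : u x * v x ≤ |u x| * |v x| := by
        rw [← abs_mul]; exact le_abs_self _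
      calc u x * v x * Real.exp (-V x) ≤ |u x| * |v x| * Real.exp (-V x) :=
            mul_le_mul_of_nonneg_right h1 (Real.exp_nonneg _)
        _ = |u x| * Real.exp (-(V x)/2) * (|v x| * Real.exp (-(V x)/2)) := by
            rw [← hexp x]; ring
  have hpq : Real.HolderConjugate 2 2 := Real.HolderConjugate.two_two
  have step2 := integral_mul_le_Lp_mul_Lq_of_nonneg (μ := volume) hpq
    (Filter.Eventually.of_forall fun x => by positivity)
    (Filter.Eventually.of_forall fun x => by positivity)
    (hUc.memLp_of_hasCompactSupport (μ := volume) hUs)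
    (hWc.memLp_of_hasCompactSupport (μ := volume) hWs)
  have hUrw : ∫ x : Euc n, U x ^ (2:ℝ) = ∫ x : Euc n, (u x)^2 * Real.exp (-V x) := by
    apply integral_congr_ae
    apply Filter.Eventually.of_forall
    intro x
    dsimp only [hU]
    rw [show (2:ℝ) = ((2:ℕ):ℝ) by norm_num, Real.rpow_natCast]
    rw [mul_pow, sq_abs, pow_two]
    rw [← hexp x]; ring
  have hWrw : ∫ x : Euc n, W x ^ (2:ℝ) = ∫ x : Euc n, (v x)^2 * Real.exp (-V x) := by
    apply integral_congr_ae
    apply Filter.Eventually.of_forall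
    intro x
    dsimp only [hW]
    rw [show (2:ℝ) = ((2:ℕ):ℝ) by norm_num, Real.rpow_natCast]
    rw [mul_pow, sq_abs, pow_two]
    rw [← hexp x]; ring
  rw [hUrw, hWrw] at step2
  calc ∫ x : Euc n, u x * v x * Real.exp (-V x) ≤ ∫ x : Euc n, U x * W x := step1
    _ ≤ (∫ x : Euc n, (u x)^2 * Real.exp (-V x)) ^ ((1:ℝ)/2)
        * (∫ x : Euc n, (v x)^2 * Real.exp (-V x)) ^ ((1:ℝ)/2) := step2
    _ = wNorm n V u * wNorm n V v := by
        rw [wNorm, wNorm, Real.sqrt_eq_rpow, Real.sqrt_eq_rpow]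

/-- Triangle-type inequality for the weighted norm. -/
lemma wNorm_le_of_bound {n : ℕ} {V h p q : Euc n → ℝ} {a b : ℝ}
    (hVc : Continuous V) (hh : Continuous h) (hp : Continuous p) (hq : Continuous q)
    (hsh : HasCompactSupport h) (hsp : HasCompactSupport p) (hsq : HasCompactSupport q)
    (ha : 0 ≤ a) (hb : 0 ≤ b) (hpn : ∀ x, 0 ≤ p x) (hqn : ∀ x, 0 ≤ q x)
    (hbd : ∀ x, |h x| ≤ a * p x + b * q x) :
    wNorm n V h ≤ a * wNorm n V p + b * wNorm n V q := by
  set X := wNorm n V p with hX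
  set Y := wNorm n V q with hY
  have hX0 : 0 ≤ X := wNorm_nonneg n V p
  have hY0 : 0 ≤ Y := wNorm_nonneg n V q
  have intp : Integrable fun x : Euc n => (p x)^2 * Real.exp (-V x) := by
    apply ((hp.pow 2).mul (hVc.neg.rexp)).integrable_of_hasCompactSupport
    apply HasCompactSupport.intro hsp
    intro x hx
    simp [image_eq_zero_of_notMem_tsupport hx]
  have intq : Integrable fun x : Euc n => (q x)^2 * Real.exp (-V x) := by
    apply ((hq.pow 2).mul (hVc.neg.rexp)).integrable_of_hasCompactSupport
    apply HasCompactSupport.intro hsq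
    intro x hx
    simp [image_eq_zero_of_notMem_tsupport hx]
  have intpq : Integrable fun x : Euc n => p x * q x * Real.exp (-V x) := by
    apply ((hp.mul hq).mul (hVc.neg.rexp)).integrable_of_hasCompactSupport
    apply HasCompactSupport.intro hsp
    intro x hx
    simp [image_eq_zero_of_notMem_tsupport hx]
  have step1 : ∫ x : Euc n, (h x)^2 * Real.exp (-V x)
      ≤ ∫ x : Euc n, (a * p x + b * q x)^2 * Real.exp (-V x) := by
    apply integral_mono
    · apply ((hh.pow 2).mul (hVc.neg.rexp)).integrable_of_hasCompactSupport
      apply HasCompactSupport.intro hsh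
      intro x hx
      simp [image_eq_zero_of_notMem_tsupport hx]
    · apply (((((continuous_const.mul hp)).add ((continuous_const.mul hq))).pow 2).mul
        (hVc.neg.rexp)).integrable_of_hasCompactSupport
      apply HasCompactSupport.intro (hsp.union hsq)
      intro x hx
      have hx1 : p x = 0 :=
        image_eq_zero_of_notMem_tsupport fun hc => hx (Set.mem_union_left _ hc)
      have hx2 : q x = 0 :=
        image_eq_zero_of_notMem_tsupport fun hc => hx (Set.mem_union_right _ hc)
      simp [hx1, hx2]
    · intro x
      apply mul_le_mul_of_nonneg_right _ (Real.exp_nonneg _)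
      have h1 : (h x)^2 = |h x|^2 := (sq_abs _).symm
      rw [h1]
      exact pow_le_pow_left₀ (abs_nonneg _) (hbd x) 2
  have expand : ∫ x : Euc n, (a * p x + b * q x)^2 * Real.exp (-V x)
      = a^2 * (∫ x : Euc n, (p x)^2 * Real.exp (-V x))
        + b^2 * (∫ x : Euc n, (q x)^2 * Real.exp (-V x))
        + 2*a*b * (∫ x : Euc n, p x * q x * Real.exp (-V x)) := by
    have e1 : (fun x : Euc n => (a * p x + b * q x)^2 * Real.exp (-V x))
        = fun x : Euc n => a^2 * ((p x)^2 * Real.exp (-V x))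
            + b^2 * ((q x)^2 * Real.exp (-V x)) + 2*a*b * (p x * q x * Real.exp (-V x)) := by
      funext x; ring
    have i1 : Integrable (fun x : Euc n => a^2 * ((p x)^2 * Real.exp (-V x))
        + b^2 * ((q x)^2 * Real.exp (-V x))) :=
      (intp.const_mul _).add (intq.const_mul _)
    have i2 : Integrable (fun x : Euc n => 2*a*b * (p x * q x * Real.exp (-V x))) :=
      intpq.const_mul _
    rw [e1, integral_add i1 i2,
      integral_add ((intp.const_mul (a^2))) ((intq.const_mul (b^2))),
      integral_const_mul, integral_const_mul, integral_const_mul]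
  have hCS : ∫ x : Euc n, p x * q x * Real.exp (-V x) ≤ X * Y := wCS hVc hp hq hsp hsq
  have hXsq : X^2 = ∫ x : Euc n, (p x)^2 * Real.exp (-V x) := wNorm_sq n V p
  have hYsq : Y^2 = ∫ x : Euc n, (q x)^2 * Real.exp (-V x) := wNorm_sq n V q
  have final : ∫ x : Euc n, (h x)^2 * Real.exp (-V x) ≤ (a*X + b*Y)^2 := by
    calc ∫ x : Euc n, (h x)^2 * Real.exp (-V x)
        ≤ ∫ x : Euc n, (a * p x + b * q x)^2 * Real.exp (-V x) := step1
      _ = a^2 * X^2 + b^2 * Y^2 + 2*a*b * (∫ x : Euc n, p x * q x * Real.exp (-V x)) := by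
          rw [expand, hXsq, hYsq]
      _ ≤ a^2 * X^2 + b^2 * Y^2 + 2*a*b * (X*Y) := by
          have : 0 ≤ 2*a*b := by positivity
          nlinarith [hCS]
      _ = (a*X + b*Y)^2 := by ring
  have : wNorm n V h ≤ Real.sqrt ((a*X + b*Y)^2) := by
    rw [wNorm]
    exact Real.sqrt_le_sqrt final
  rwa [Real.sqrt_sq (by positivity)] at this

set_option maxHeartbeats 1000000 in
/-- `H₁` is `H₀`-bounded with relative bound `0` in `L²(ℝⁿ, e^{-V}dx)`. -/
theorem statement19 (n : ℕ) (V : Euc n → ℝ) (b : Euc n → Euc n)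
    (hA : AssumptionA n V) (hb : ContDiff ℝ 1 b)
    (hbB : ∃ M : ℝ, ∀ x, ‖b x‖ ≤ M) (hbD : ∃ M : ℝ, ∀ x, ‖fderiv ℝ b x‖ ≤ M)
    (lam : ℝ) (γ : ℝ) (hγ : 0 < γ) :
    ∃ C : ℝ, 0 < C ∧ ∀ f : Euc n → ℝ, ContDiff ℝ (⊤ : ℕ∞) f → HasCompactSupport f →
      wNorm n V (H1op n b lam f) ≤ γ * wNorm n V (H0op n V f) + C * wNorm n V f := by
  obtain ⟨hV2, -⟩ := hA
  obtain ⟨M, hM⟩ := hbB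
  obtain ⟨M', hM'⟩ := hbD
  have hM0 : 0 ≤ M := le_trans (norm_nonneg (b 0)) (hM 0)
  have hM'0 : 0 ≤ M' := le_trans (norm_nonneg (fderiv ℝ b 0)) (hM' 0)
  set A : ℝ := |1 + 2*lam| * M with hAdef
  set B : ℝ := |2*lam*(1+lam)| * M^2 + |lam| * ((n : ℝ) * M') with hBdef
  have hA0 : 0 ≤ A := by positivity
  have hB0 : 0 ≤ B := by positivity
  set ε : ℝ := γ / (A + 1) with hε
  have hεpos : 0 < ε := by positivity
  refine ⟨A/ε + B + 1, by positivity, ?_⟩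
  intro f hf hsf
  have hVc : Continuous V := hV2.continuous
  set X := wNorm n V f with hX
  set Z := wNorm n V (H0op n V f) with hZ
  set G := wNorm n V (fun x => ‖gradient f x‖) with hG
  have hX0 : 0 ≤ X := wNorm_nonneg n V f
  have hZ0 : 0 ≤ Z := wNorm_nonneg n V _
  have hG0 : 0 ≤ G := wNorm_nonneg n V _
  have hgc : Continuous fun x : Euc n => ‖gradient f x‖ :=
    (grad_continuous ((hf.fderiv_right (m := (⊤ : ℕ∞)) (by simp)).continuous)).norm
  have hgs : HasCompactSupport fun x : Euc n => ‖gradient f x‖ := by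
    apply HasCompactSupport.intro hsf
    intro x hx
    simp [grad_eq_zero (fderiv_zero_of_nmem hx)]
  have hH0s : HasCompactSupport (H0op n V f) :=
    HasCompactSupport.intro hsf fun x hx => H0_zero hx
  have hH1s : HasCompactSupport (H1op n b lam f) :=
    HasCompactSupport.intro hsf fun x hx => H1_zero hx
  have hfabs : HasCompactSupport fun x : Euc n => |f x| := by
    apply HasCompactSupport.intro hsf
    intro x hx
    simp [image_eq_zero_of_notMem_tsupport hx]
  -- pointwise bound on H1
  have hdivg : ∀ x, |divg n b x| ≤ (n : ℝ) * M' := by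
    intro x
    unfold divg
    calc |∑ i : Fin n, ⟪fderiv ℝ b x (EuclideanSpace.single i 1), EuclideanSpace.single i 1⟫_ℝ|
        ≤ ∑ i : Fin n, |⟪fderiv ℝ b x (EuclideanSpace.single i 1), EuclideanSpace.single i 1⟫_ℝ| :=
          Finset.abs_sum_le_sum_abs _ _
      _ ≤ ∑ _i : Fin n, M' := by
          apply Finset.sum_le_sum
          intro i _
          calc |⟪fderiv ℝ b x (EuclideanSpace.single i 1), EuclideanSpace.single i 1⟫_ℝ|
              ≤ ‖fderiv ℝ b x (EuclideanSpace.single i 1)‖ * ‖(EuclideanSpace.single i (1:ℝ) : Euc n)‖ :=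
                abs_real_inner_le_norm _ _
            _ ≤ (‖fderiv ℝ b x‖ * ‖(EuclideanSpace.single i (1:ℝ) : Euc n)‖)
                  * ‖(EuclideanSpace.single i (1:ℝ) : Euc n)‖ := by
                apply mul_le_mul_of_nonneg_right ((fderiv ℝ b x).le_opNorm _) (norm_nonneg _)
            _ ≤ M' := by
                have h1 : ‖(EuclideanSpace.single i (1:ℝ) : Euc n)‖ = 1 := by
                  rw [EuclideanSpace.norm_single]; norm_num
                rw [h1, mul_one, mul_one]
                exact hM' x
      _ = (n : ℝ) * M' := by
          rw [Finset.sum_const, Finset.card_univ, Fintype.card_fin]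
          simp [nsmul_eq_mul]
  have hbd : ∀ x, |H1op n b lam f x| ≤ A * ‖gradient f x‖ + B * |f x| := by
    intro x
    unfold H1op
    have hinner : |⟪b x, gradient f x⟫_ℝ| ≤ M * ‖gradient f x‖ :=
      (abs_real_inner_le_norm _ _).trans
        (mul_le_mul_of_nonneg_right (hM x) (norm_nonneg _))
    have h1 : |(1 + 2*lam) * ⟪b x, gradient f x⟫_ℝ| ≤ A * ‖gradient f x‖ := by
      rw [abs_mul, hAdef, mul_assoc]
      exact mul_le_mul_of_nonneg_left hinner (abs_nonneg _)
    have hb2 : ‖b x‖^2 ≤ M^2 := by nlinarith [norm_nonneg (b x), hM x]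
    have h2 : |2 * lam * (1 + lam) * ‖b x‖ ^ 2 + lam * divg n b x| ≤ B := by
      have e1 : |2 * lam * (1 + lam) * ‖b x‖ ^ 2| = |2*lam*(1+lam)| * ‖b x‖^2 := by
        rw [abs_mul, abs_of_nonneg (by positivity : (0:ℝ) ≤ ‖b x‖^2)]
      have e2 : |lam * divg n b x| = |lam| * |divg n b x| := abs_mul _ _
      have e3 := abs_add_le (2 * lam * (1 + lam) * ‖b x‖ ^ 2) (lam * divg n b x)
      rw [e1, e2] at e3
      rw [hBdef]
      have t1 : |2*lam*(1+lam)| * ‖b x‖^2 ≤ |2*lam*(1+lam)| * M^2 :=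
        mul_le_mul_of_nonneg_left hb2 (abs_nonneg _)
      have t2 : |lam| * |divg n b x| ≤ |lam| * ((n:ℝ) * M') :=
        mul_le_mul_of_nonneg_left (hdivg x) (abs_nonneg _)
      linarith
    calc |(1 + 2 * lam) * ⟪b x, gradient f x⟫_ℝ
          + (2 * lam * (1 + lam) * ‖b x‖ ^ 2 + lam * divg n b x) * f x|
        ≤ |(1 + 2 * lam) * ⟪b x, gradient f x⟫_ℝ|
          + |(2 * lam * (1 + lam) * ‖b x‖ ^ 2 + lam * divg n b x)| * |f x| := by
          rw [← abs_mul]; exact abs_add_le _ _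
      _ ≤ A * ‖gradient f x‖ + B * |f x| :=
          add_le_add h1 (mul_le_mul_of_nonneg_right h2 (abs_nonneg _))
  -- step 1 : triangle inequality
  have hstep1 : wNorm n V (H1op n b lam f) ≤ A * G + B * X := by
    have := wNorm_le_of_bound (n := n) (V := V) hVc (H1_continuous hb hf lam)
      hgc hf.continuous.abs hH1s hgs hfabs hA0 hB0
      (fun x => norm_nonneg _) (fun x => abs_nonneg _) hbd
    rwa [wNorm_abs] at this
  -- step 2: gradient bound via integration by parts
  have hGsq : G^2 ≤ 2 * (X * Z) := by
    have h1 : G^2 = ∫ x : Euc n, ‖gradient f x‖^2 * Real.exp (-V x) := wNorm_sq n V _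
    rw [h1, ibp hV2 hf hsf]
    have hneg : ∫ x : Euc n, (-f x) * H0op n V f x * Real.exp (-V x)
        = -∫ x : Euc n, f x * H0op n V f x * Real.exp (-V x) := by
      rw [← integral_neg]
      apply integral_congr_ae
      apply Filter.Eventually.of_forall
      intro x; dsimp only; ring
    have hnegsupp : HasCompactSupport fun x : Euc n => -f x :=
      HasCompactSupport.intro hsf fun x hx => by
        simp [image_eq_zero_of_notMem_tsupport hx]
    have hcs := wCS (u := fun x => -f x) hVc hf.continuous.neg (H0_continuous hV2 hf)
      hnegsupp hH0s
    rw [hneg] at hcs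
    have hwneg : wNorm n V (fun x => -f x) = X := by
      simp [wNorm, hX]
    rw [hwneg] at hcs
    nlinarith [hcs]
  have hGle : G ≤ ε * Z + X / ε := by
    have h1 : ε * Z * (X / ε) = Z * X := by field_simp
    have h2 : G^2 ≤ (ε*Z + X/ε)^2 := by nlinarith [sq_nonneg (ε*Z - X/ε)]
    have h3 := Real.sqrt_le_sqrt h2
    rwa [Real.sqrt_sq hG0, Real.sqrt_sq (by positivity)] at h3
  have hAε : A * ε ≤ γ := by
    rw [hε, mul_comm, div_mul_eq_mul_div, div_le_iff₀ (by positivity)]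
    nlinarith
  calc wNorm n V (H1op n b lam f) ≤ A * G + B * X := hstep1
    _ ≤ A * (ε * Z + X / ε) + B * X :=
        add_le_add_left (mul_le_mul_of_nonneg_left hGle hA0) _
    _ = (A * ε) * Z + (A/ε + B) * X := by ring
    _ ≤ γ * Z + (A/ε + B + 1) * X := by nlinarith
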